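/- Let (a_n)_{n≥0} be a real sequence with Σ_{n=1}^{∞} n² |a_n| < ∞, and let f : [−1,1] → ℝ satisfy f(x) = a_0/2 + Σ_{n=1}^{∞} a_n T_n(x) for all x ∈ [−1,1]. For N ≥ 1, let C_N be the unique polynomial of degree at most N with C_N(x_k) = f(x_k) at the Gauss–Lobatto nodes x_k = −cos(kπ/N), k = 0,…,N. Then the derivative of the interpolant approximates the derivative of f with at most twice the truncation penalty: sup_{x∈[−1,1]} |f'(x) − C_N'(x)| ≤ 2 Σ_{n=N}^{∞} n² |a_n|, where f' denotes the derivative of f within [−1,1]. -/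

import Mathlib

/-!
At the Gauss–Lobatto nodes `cos (jπ/N)` the polynomial `Tₙ` takes the same values as `Tₘ`, where
`m ∈ [0, N]` is `n` reduced modulo `2N` and reflected (`cos` is `2π`-periodic and even). Hence the
interpolant is the Chebyshev series of `f` with every index replaced by its alias, and
`f' - C' = ∑_{n > N} aₙ (Tₙ' - Tₘ')`. On `[-1, 1]` we have `|Tₙ'| ≤ n²`, which both justifies
differentiating the series termwise and bounds each term by `2 n² |aₙ|`.
-/

open Polynomial Chebyshev Real Finset

theorem hasDerivWithinAt_tsum_of_convex {ι F : Type*} [NormedAddCommGroup F] [NormedSpace ℝ F]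
    [CompleteSpace F] {s : Set ℝ} (hs : Convex ℝ s) {g g' : ι → ℝ → F} {u : ι → ℝ}
    (hu : Summable u) (hg : ∀ n, ∀ y ∈ s, HasDerivWithinAt (g n) (g' n y) s y)
    (hg' : ∀ n, ∀ y ∈ s, ‖g' n y‖ ≤ u n) (hgs : ∀ y ∈ s, Summable (g · y)) {x : ℝ}
    (hx : x ∈ s) :
    HasDerivWithinAt (fun y => ∑' n, g n y) (∑' n, g' n x) s x := by
  rw [hasDerivWithinAt_iff_tendsto_slope]
  -- Tannery's theorem for the difference quotients, which the mean value bound dominates by `u`.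
  refine (tendsto_tsum_of_dominated_convergence hu
    (fun n => hasDerivWithinAt_iff_tendsto_slope.1 (hg n x hx)) ?_).congr' ?_
  · filter_upwards [self_mem_nhdsWithin] with y ⟨hy, hne⟩ n
    have hyx : y - x ≠ 0 := sub_ne_zero.2 hne
    rw [slope_def_module, norm_smul, norm_inv, inv_mul_le_iff₀ (norm_pos_iff.2 hyx), mul_comm]
    exact hs.norm_image_sub_le_of_norm_hasDerivWithin_le (hg n) (hg' n) hx hy
  · filter_upwards [self_mem_nhdsWithin] with y hy
    simp only [slope_def_module, ← (hgs y hy.1).tsum_sub (hgs x hx), tsum_const_smul'']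

theorem norm_tsum_le_tsum_nat_add_of_eq_zero {E : Type*} [NormedAddCommGroup E] [CompleteSpace E]
    {d : ℕ → E} {w : ℕ → ℝ} {N : ℕ} (hd : ∀ n < N, d n = 0) (hdw : ∀ n, ‖d n‖ ≤ w n)
    (hw : Summable w) : ‖∑' n, d n‖ ≤ ∑' n, w (n + N) := by
  have hnorm : Summable (‖d ·‖) := hw.of_nonneg_of_le (fun _ => norm_nonneg _) hdw
  rw [← hnorm.of_norm.sum_add_tsum_nat_add N, sum_eq_zero fun n hn => hd n (mem_range.1 hn),
    zero_add]
  exact (norm_tsum_le_tsum_norm (hnorm.comp_injective (add_left_injective N))).trans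
    (Summable.tsum_le_tsum (fun n => hdw _) (hnorm.comp_injective (add_left_injective N))
      (hw.comp_injective (add_left_injective N)))

theorem Summable.hasSum_mul_map_comp {ι κ M : Type*} [DecidableEq κ] [AddCommMonoid M]
    [Module ℝ M] {c : ι → ℝ} (hc : Summable c) (L : M →ₗ[ℝ] ℝ) (v : κ → M) {σ : ι → κ}
    {S : Finset κ} (hσ : ∀ n, σ n ∈ S) :
    HasSum (fun n => c n * L (v (σ n)))
      (L (∑ m ∈ S, (∑' n, if σ n = m then c n else 0) • v m)) := by
  have hfiber (m : κ) : HasSum (fun n => if σ n = m then c n else 0)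
      (∑' n, if σ n = m then c n else 0) :=
    (hc.norm.of_norm_bounded fun n => by split_ifs <;> simp).hasSum
  have hsplit : (fun n => c n * L (v (σ n)))
      = fun n => ∑ m ∈ S, (if σ n = m then c n else 0) * L (v m) := by
    funext n
    simp [ite_mul, sum_ite_eq, hσ n]
  simpa only [hsplit, map_sum, map_smul, smul_eq_mul] using
    hasSum_sum fun m (_ : m ∈ S) => (hfiber m).mul_right (L (v m))

theorem abs_eval_derivative_T_real_le (n : ℕ) {x : ℝ} (hx : |x| ≤ 1) :
    |(derivative (T ℝ n)).eval x| ≤ (n : ℝ) ^ 2 := by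
  simpa [derivative_T_eval_one] using abs_iterate_derivative_T_real_le n 1 hx

theorem norm_mul_eval_derivative_T_le (c : ℝ) (n : ℕ) {x : ℝ} (hx : |x| ≤ 1) :
    ‖c * (derivative (T ℝ n)).eval x‖ ≤ (n : ℝ) ^ 2 * |c| := by
  rw [Real.norm_eq_abs, abs_mul, mul_comm]
  exact mul_le_mul_of_nonneg_right (abs_eval_derivative_T_real_le n hx) (abs_nonneg c)

theorem hasDerivWithinAt_chebyshev_series {a : ℕ → ℝ}
    (ha : Summable fun n : ℕ => (n : ℝ) ^ 2 * |a n|) {f : ℝ → ℝ} {c : ℝ}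
    (hf : ∀ x ∈ Set.Icc (-1 : ℝ) 1,
      HasSum (fun n : ℕ => a (n + 1) * (T ℝ (n + 1)).eval x) (f x - c))
    {x : ℝ} (hx : x ∈ Set.Icc (-1 : ℝ) 1) :
    HasDerivWithinAt f (∑' n : ℕ, a (n + 1) * (derivative (T ℝ (n + 1 : ℕ))).eval x)
      (Set.Icc (-1) 1) x := by
  refine ((hasDerivWithinAt_tsum_of_convex (convex_Icc _ _) ((summable_nat_add_iff 1).2 ha)
    (fun n y _ => ((T ℝ (n + 1 : ℕ)).hasDerivAt y).hasDerivWithinAt.const_mul _)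
    (fun n y hy => norm_mul_eval_derivative_T_le _ _ (abs_le.2 hy))
    (fun y hy => by exact_mod_cast (hf y hy).summable) hx).const_add c).congr_of_mem
    (fun y hy => ?_) hx
  push_cast
  rw [(hf y hy).tsum_eq]
  ring

theorem eq_of_natDegree_le_of_eval_node_eq {N : ℕ} {p q : ℝ[X]} (hp : p.natDegree ≤ N)
    (hq : q.natDegree ≤ N) (h : ∀ j ≤ N, p.eval (node N j) = q.eval (node N j)) : p = q := by
  have hcard : #((range (N + 1)).image (node N ·)) = N + 1 := by
    rw [card_image_of_injOn (strictAntiOn_node N).injOn, card_range]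
  have hdeg {r : ℝ[X]} (hr : r.natDegree ≤ N) :
      r.degree < #((range (N + 1)).image (node N ·)) := by
    rw [hcard]
    exact (degree_le_of_natDegree_le hr).trans_lt (by exact_mod_cast N.lt_succ_self)
  refine eq_of_degrees_lt_of_eval_finset_eq _ (hdeg hp) (hdeg hq) ?_
  simp only [mem_image, mem_range, forall_exists_index, and_imp, forall_apply_eq_imp_iff₂]
  exact fun j hj => h j (Nat.lt_succ_iff.1 hj)

theorem neg_cos_eq_node {N j : ℕ} (hN : N ≠ 0) (hj : j ≤ N) :
    -cos ((N - j : ℕ) * π / N) = node N j := by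
  rw [node, Nat.cast_sub hj, sub_mul, sub_div, mul_div_cancel_left₀ _ (by exact_mod_cast hN),
    cos_pi_sub, neg_neg]

theorem eval_T_node_of_modEq {N : ℕ} {m n : ℤ} (h : m ≡ n [ZMOD 2 * N]) (j : ℕ) :
    (T ℝ m).eval (node N j) = (T ℝ n).eval (node N j) := by
  rcases eq_or_ne N 0 with rfl | hN
  · simp [node, T_eval_one]
  obtain ⟨q, hq⟩ := h.symm.dvd
  have hm : (m : ℝ) * (j * π / N) = n * (j * π / N) + (q * j : ℤ) * (2 * π) := by
    rw [eq_add_of_sub_eq' hq]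
    push_cast
    field_simp
  rw [node, T_real_cos, T_real_cos, hm, cos_add_int_mul_two_pi]

def chebyshevAlias (N n : ℕ) : ℕ :=
  if n % (2 * N) ≤ N then n % (2 * N) else 2 * N - n % (2 * N)

theorem chebyshevAlias_le (N n : ℕ) : chebyshevAlias N n ≤ N := by
  unfold chebyshevAlias
  split_ifs <;> omega

theorem chebyshevAlias_le_self (N n : ℕ) : chebyshevAlias N n ≤ n := by
  have := Nat.mod_le n (2 * N)
  unfold chebyshevAlias
  split_ifs <;> omega

theorem chebyshevAlias_of_le {N n : ℕ} (h : n ≤ N) : chebyshevAlias N n = n := by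
  rcases eq_or_ne N 0 with rfl | hN
  · simp [chebyshevAlias, Nat.le_zero.1 h]
  rw [chebyshevAlias, Nat.mod_eq_of_lt (by omega), if_pos h]

theorem chebyshevAlias_modEq {N : ℕ} (hN : N ≠ 0) (n : ℕ) :
    (chebyshevAlias N n : ℤ) ≡ n [ZMOD 2 * N] ∨ (chebyshevAlias N n : ℤ) ≡ -n [ZMOD 2 * N] := by
  have hmod : ((n % (2 * N) : ℕ) : ℤ) ≡ n [ZMOD 2 * N] := by
    exact_mod_cast Nat.mod_modEq n (2 * N)
  unfold chebyshevAlias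
  split_ifs with h
  · exact Or.inl hmod
  · right
    have hlt : n % (2 * N) < 2 * N := Nat.mod_lt _ (by omega)
    rw [Nat.cast_sub hlt.le]
    push_cast
    calc (2 * N - (n % (2 * N) : ℕ) : ℤ) ≡ 0 - n [ZMOD 2 * N] :=
          (Int.modEq_zero_iff_dvd.2 dvd_rfl).sub hmod
      _ = -n := zero_sub _

theorem eval_T_chebyshevAlias_node {N : ℕ} (hN : N ≠ 0) (n j : ℕ) :
    (T ℝ (chebyshevAlias N n)).eval (node N j) = (T ℝ n).eval (node N j) := by
  rcases chebyshevAlias_modEq hN n with h | h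
  · exact eval_T_node_of_modEq h j
  · rw [eval_T_node_of_modEq h, T_neg]

noncomputable def chebyshevAliasSum (a : ℕ → ℝ) (N : ℕ) : ℝ[X] :=
  ∑ m ∈ range (N + 1), (∑' n, if chebyshevAlias N (n + 1) = m then a (n + 1) else 0) • T ℝ m

theorem natDegree_chebyshevAliasSum_le (a : ℕ → ℝ) (N : ℕ) :
    (chebyshevAliasSum a N).natDegree ≤ N := by
  refine natDegree_sum_le_of_forall_le _ _ fun m hm => (natDegree_smul_le _ _).trans ?_
  simpa [natDegree_T] using mem_range_succ_iff.1 hm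

theorem hasSum_map_chebyshevAliasSum {a : ℕ → ℝ} (ha : Summable fun n => a (n + 1)) (N : ℕ)
    (L : ℝ[X] →ₗ[ℝ] ℝ) :
    HasSum (fun n => a (n + 1) * L (T ℝ (chebyshevAlias N (n + 1))))
      (L (chebyshevAliasSum a N)) :=
  ha.hasSum_mul_map_comp L _ fun _ => mem_range_succ_iff.2 (chebyshevAlias_le _ _)

theorem hasSum_eval_chebyshevAliasSum {a : ℕ → ℝ} (ha : Summable fun n => a (n + 1)) (N : ℕ)
    (x : ℝ) :
    HasSum (fun n => a (n + 1) * (T ℝ (chebyshevAlias N (n + 1))).eval x)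
      ((chebyshevAliasSum a N).eval x) :=
  hasSum_map_chebyshevAliasSum ha N (leval x)

theorem hasSum_eval_derivative_chebyshevAliasSum {a : ℕ → ℝ}
    (ha : Summable fun n => a (n + 1)) (N : ℕ) (x : ℝ) :
    HasSum (fun n => a (n + 1) * (derivative (T ℝ (chebyshevAlias N (n + 1)))).eval x)
      ((derivative (chebyshevAliasSum a N)).eval x) :=
  hasSum_map_chebyshevAliasSum ha N ((leval x).comp derivative)

theorem eq_C_add_chebyshevAliasSum {a : ℕ → ℝ} (ha : Summable fun n => a (n + 1))
    {f : ℝ → ℝ} {c : ℝ}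
    (hf : ∀ x ∈ Set.Icc (-1 : ℝ) 1,
      HasSum (fun n : ℕ => a (n + 1) * (T ℝ (n + 1)).eval x) (f x - c))
    {N : ℕ} (hN : N ≠ 0) {p : ℝ[X]} (hp : p.natDegree ≤ N)
    (hpf : ∀ k ≤ N, p.eval (-cos (k * π / N)) = f (-cos (k * π / N))) :
    p = C c + chebyshevAliasSum a N := by
  refine eq_of_natDegree_le_of_eval_node_eq hp
    (natDegree_add_le_of_degree_le (by simp) (natDegree_chebyshevAliasSum_le a N))
    fun j hj => ?_
  rw [← neg_cos_eq_node hN hj, hpf _ (Nat.sub_le _ _), neg_cos_eq_node hN hj, eval_add, eval_C,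
    ← (hasSum_eval_chebyshevAliasSum ha N _).tsum_eq]
  simp only [eval_T_chebyshevAlias_node hN]
  push_cast
  rw [(hf _ node_mem_Icc).tsum_eq]
  ring

theorem abs_tsum_derivative_T_sub_chebyshevAlias_le {a : ℕ → ℝ}
    (ha : Summable fun n : ℕ => (n : ℝ) ^ 2 * |a n|) (N : ℕ) {x : ℝ} (hx : |x| ≤ 1) :
    |∑' n : ℕ, a (n + 1) * (derivative (T ℝ (n + 1 : ℕ))).eval x
        - ∑' n : ℕ, a (n + 1) * (derivative (T ℝ (chebyshevAlias N (n + 1)))).eval x|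
      ≤ 2 * ∑' n : ℕ, ((N + n : ℕ) : ℝ) ^ 2 * |a (N + n)| := by
  set w : ℕ → ℝ := fun n => ((n + 1 : ℕ) : ℝ) ^ 2 * |a (n + 1)|
  have hw : Summable w := (summable_nat_add_iff 1).2 ha
  have haliasw (n : ℕ) :
      ‖a (n + 1) * (derivative (T ℝ (chebyshevAlias N (n + 1)))).eval x‖ ≤ w n := by
    refine (norm_mul_eval_derivative_T_le _ _ hx).trans
      (mul_le_mul_of_nonneg_right ?_ (abs_nonneg _))
    exact pow_le_pow_left₀ (Nat.cast_nonneg _) (by exact_mod_cast chebyshevAlias_le_self _ _) 2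
  rw [← Summable.tsum_sub (hw.of_norm_bounded fun n => norm_mul_eval_derivative_T_le _ _ hx)
    (hw.of_norm_bounded haliasw), ← Real.norm_eq_abs]
  refine (norm_tsum_le_tsum_nat_add_of_eq_zero (N := N) (w := fun n => 2 * w n)
    (d := fun n => a (n + 1) * (derivative (T ℝ (n + 1 : ℕ))).eval x
        - a (n + 1) * (derivative (T ℝ (chebyshevAlias N (n + 1)))).eval x)
    (fun n hn => ?_) (fun n => ?_) (hw.mul_left 2)).trans ?_
  · rw [chebyshevAlias_of_le hn, sub_self]
  · rw [two_mul]
    exact (norm_sub_le _ _).trans (add_le_add (norm_mul_eval_derivative_T_le _ _ hx) (haliasw n))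
  · have hv : Summable fun n : ℕ => ((N + n : ℕ) : ℝ) ^ 2 * |a (N + n)| :=
      ha.comp_injective (add_right_injective N)
    have hshift (n : ℕ) : w (n + N) = ((N + (n + 1) : ℕ) : ℝ) ^ 2 * |a (N + (n + 1))| := by
      simp only [w, show n + N + 1 = N + (n + 1) by omega]
    rw [hv.tsum_eq_zero_add, tsum_mul_left, tsum_congr hshift]
    exact mul_le_mul_of_nonneg_left (le_add_of_nonneg_left (by positivity)) zero_le_two

/-- Derivative of the Chebyshev interpolant: if `f(x) = a₀/2 + Σ_{n=1}^∞ aₙ Tₙ(x)` with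
`Σ n² |aₙ| < ∞`, and `C` is the (unique) polynomial of degree at most `N` agreeing with `f`
at the Gauss–Lobatto nodes `xₖ = -cos(kπ/N)`, `k = 0, …, N`, then
`sup_{x ∈ [-1,1]} |f'(x) - C'(x)| ≤ 2 Σ_{n=N}^∞ n² |aₙ|`, where `f'` denotes the derivative
of `f` within `[-1,1]`. -/
theorem chebyshev_interpolation_derivative_error
    (a : ℕ → ℝ) (ha : Summable fun n : ℕ => (n : ℝ) ^ 2 * |a n|)
    (f : ℝ → ℝ)
    (hf : ∀ x ∈ Set.Icc (-1 : ℝ) 1,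
      HasSum (fun n : ℕ => a (n + 1) * (Chebyshev.T ℝ (n + 1)).eval x) (f x - a 0 / 2))
    (N : ℕ) (hN : 1 ≤ N)
    (C : Polynomial ℝ) (hdeg : C.natDegree ≤ N)
    (hC : ∀ k : ℕ, k ≤ N →
      C.eval (-Real.cos (k * Real.pi / N)) = f (-Real.cos (k * Real.pi / N))) :
    ∀ x ∈ Set.Icc (-1 : ℝ) 1,
      |derivWithin f (Set.Icc (-1 : ℝ) 1) x - (Polynomial.derivative C).eval x|
        ≤ 2 * ∑' n : ℕ, ((N + n : ℕ) : ℝ) ^ 2 * |a (N + n)| := by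
  intro x hx
  have hc : Summable fun n => a (n + 1) :=
    ((summable_nat_add_iff 1).2 ha).of_norm_bounded fun n =>
      le_mul_of_one_le_left (abs_nonneg _) (one_le_pow₀ (by simp))
  have hf' := hasDerivWithinAt_chebyshev_series ha hf hx
  rw [hf'.derivWithin (uniqueDiffOn_Icc (by norm_num) x hx),
    eq_C_add_chebyshevAliasSum hc hf (by omega) hdeg hC, derivative_add, derivative_C, zero_add,
    ← (hasSum_eval_derivative_chebyshevAliasSum hc N x).tsum_eq]
  exact abs_tsum_derivative_T_sub_chebyshevAlias_le ha N (abs_le.2 hx)
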